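/- arXiv:2504.02315 — 2 statements merged into one kernel-verified Lean document; each statement's English description precedes it below -/
import Mathlib

section
/- Let r ≥ 2 be an integer. There exists a constant C, depending only on r, such that for every real number β and every real X ≥ 1 one has |∫₀^{X^{1/r}} e(β u^r) du| ≤ C · (X/(1+|β|X))^{1/r}. -/
open MeasureTheory
open Complex intervalIntegral


/-- `e(x) = exp(2πix)`. -/
noncomputable def e (x : ℝ) : ℂ := Complex.exp (2 * (Real.pi : ℂ) * Complex.I * (x : ℂ))

lemma norm_e (x : ℝ) : ‖e x‖ = 1 := by
  unfold e
  rw [Complex.norm_exp]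
  have : (2 * (Real.pi:ℂ) * Complex.I * (x:ℂ)).re = 0 := by simp [Complex.mul_re]
  rw [this, Real.exp_zero]

lemma m2ne (m : ℕ) : ((m:ℂ) + 2) ≠ 0 := by
  intro h
  have h2 := congrArg Complex.re h
  simp at h2
  have : (0:ℝ) ≤ (m:ℝ) := Nat.cast_nonneg m
  linarith

lemma Fderiv (c : ℂ) (m : ℕ) (u : ℝ) :
    HasDerivAt (fun u : ℝ => Complex.exp (c * (u:ℂ)^(m+2)))
      (c*(m+2)*(u:ℂ)^(m+1) * Complex.exp (c*(u:ℂ)^(m+2))) u := by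
  have h := (((hasDerivAt_pow (m+2) (u:ℂ)).const_mul c).cexp).comp_ofReal
  convert h using 1
  push_cast; ring

lemma Gderiv (c : ℂ) (hcne : c ≠ 0) (m : ℕ) (u : ℝ) (hu : u ≠ 0) :
    HasDerivAt (fun u : ℝ => Complex.exp (c * (u:ℂ)^(m+2)) / (c*(m+2)*(u:ℂ)^(m+1)))
      (Complex.exp (c * (u:ℂ)^(m+2))
        - (m+1) * Complex.exp (c * (u:ℂ)^(m+2)) / (c*(m+2)*(u:ℂ)^(m+2))) u := by
  have hune : ((u:ℂ)) ≠ 0 := Complex.ofReal_ne_zero.mpr hu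
  have hgne : c * (m+2) * (u:ℂ)^(m+1) ≠ 0 :=
    mul_ne_zero (mul_ne_zero hcne (m2ne m)) (pow_ne_zero _ hune)
  have hDne : c * (m+2) * (u:ℂ)^(m+2) ≠ 0 :=
    mul_ne_zero (mul_ne_zero hcne (m2ne m)) (pow_ne_zero _ hune)
  have hg2 : (c * (m+2) * (u:ℂ)^(m+1))^2 ≠ 0 := pow_ne_zero _ hgne
  have hgd : HasDerivAt (fun u : ℝ => c * (m+2) * (u:ℂ)^(m+1)) (c*(m+2)*((m+1)*(u:ℂ)^m)) u := by
    have := (((hasDerivAt_pow (m+1) (u:ℂ)).comp_ofReal).const_mul (c*((m:ℂ)+2)))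
    refine this.congr_deriv (Eq.symm ?_)
    push_cast; ring_nf
  have hd := (Fderiv c m u).div hgd hgne
  refine hd.congr_deriv (Eq.symm ?_)
  rw [eq_div_iff hg2]
  field_simp [m2ne m]
  ring

lemma Kderiv (m : ℕ) (u : ℝ) (hu : u ≠ 0) :
    HasDerivAt (fun u : ℝ => -((u^(m+1))⁻¹/(m+1))) ((u^(m+2))⁻¹) u := by
  have h1 : (u : ℝ)^(m+1) ≠ 0 := pow_ne_zero _ hu
  have hd := (((hasDerivAt_pow (m+1) u).inv h1).div_const ((m:ℝ)+1)).neg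
  refine hd.congr_deriv (Eq.symm ?_)
  simp only [Nat.add_sub_cancel]
  push_cast
  field_simp
  ring

lemma key (m : ℕ) (β : ℝ) (hβ : β ≠ 0) (δ T : ℝ) (hδ : 0 < δ) (hδT : δ ≤ T)
    (hδβ : δ ^ (m+2) * |β| = 1) :
    ‖∫ u in δ..T, e (β * u ^ (m+2))‖ ≤ δ := by
  set B := |β| with hB
  have hBpos : 0 < B := abs_pos.mpr hβ
  set c : ℂ := 2 * (Real.pi : ℂ) * Complex.I * (β : ℂ) with hc
  have hcne : c ≠ 0 := by
    simp [hc, Complex.ext_iff, Real.pi_ne_zero, hβ]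
  have hnormc : ‖c‖ = 2 * Real.pi * B := by
    simp [hc, hB, abs_of_pos Real.pi_pos]
  have he : ∀ u : ℝ, e (β * u ^ (m+2)) = Complex.exp (c * (u:ℂ)^(m+2)) := by
    intro u; unfold e; rw [hc]; push_cast; ring_nf
  have hnorm_exp : ∀ u : ℝ, ‖Complex.exp (c * (u:ℂ)^(m+2))‖ = 1 := by
    intro u; rw [← he]; exact norm_e _
  set G : ℝ → ℂ := fun u => Complex.exp (c * (u:ℂ)^(m+2)) / (c * (m+2) * (u:ℂ)^(m+1)) with hG
  set h : ℝ → ℂ := fun u => (m+1) * Complex.exp (c * (u:ℂ)^(m+2)) / (c * (m+2) * (u:ℂ)^(m+2)) with hh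
  have hupos : ∀ u ∈ Set.uIcc δ T, 0 < u := by
    intro u hu
    rw [Set.uIcc_of_le hδT] at hu
    exact lt_of_lt_of_le hδ hu.1
  have hG' : ∀ u ∈ Set.uIcc δ T, HasDerivAt G (Complex.exp (c * (u:ℂ)^(m+2)) - h u) u :=
    fun u hu => Gderiv c hcne m u (ne_of_gt (hupos u hu))
  have hm2ne' : ∀ u : ℝ, u ≠ 0 → c * (m+2) * (u:ℂ)^(m+2) ≠ 0 := fun u hu =>
    mul_ne_zero (mul_ne_zero hcne (m2ne m)) (pow_ne_zero _ (Complex.ofReal_ne_zero.mpr hu))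
  have hconth : ContinuousOn h (Set.uIcc δ T) := by
    apply ContinuousOn.div
    · fun_prop
    · fun_prop
    · exact fun u hu => hm2ne' u (ne_of_gt (hupos u hu))
  have hinth : IntervalIntegrable h volume δ T := hconth.intervalIntegrable
  have hintexp : IntervalIntegrable (fun u : ℝ => Complex.exp (c * (u:ℂ)^(m+2))) volume δ T :=
    (Continuous.intervalIntegrable (by fun_prop) _ _)
  have ftc := intervalIntegral.integral_eq_sub_of_hasDerivAt hG' (hintexp.sub hinth)
  rw [intervalIntegral.integral_sub hintexp hinth] at ftc
  have hsplit : (∫ u in δ..T, e (β * u ^ (m+2))) = G T - G δ + ∫ u in δ..T, h u := by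
    simp_rw [he]
    rw [← ftc]; ring
  rw [hsplit]
  -- norms of the pieces
  have hden : ∀ (k : ℕ) (u : ℝ), 0 < u → ‖c*((m:ℂ)+2)*(u:ℂ)^k‖ = (2*Real.pi*B)*((m:ℝ)+2)*u^k := by
    intro k u hu
    rw [norm_mul, norm_mul, norm_pow]
    have h1 : ‖((m:ℂ)+2)‖ = (m:ℝ)+2 := by
      rw [show ((m:ℂ)+2) = (((m:ℝ)+2:ℝ):ℂ) by push_cast; ring, Complex.norm_real,
        Real.norm_eq_abs, abs_of_pos (by positivity)]
    rw [h1, hnormc, Complex.norm_real, Real.norm_eq_abs, abs_of_pos hu]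
  have hGnorm : ∀ u : ℝ, 0 < u → ‖G u‖ = 1/(2*Real.pi*B*((m:ℝ)+2)*u^(m+1)) := by
    intro u hu
    rw [hG]
    simp only []
    rw [norm_div, hnorm_exp, hden (m+1) u hu]
  have hhnorm : ∀ u : ℝ, 0 < u →
      ‖h u‖ = (((m:ℝ)+1)/(2*Real.pi*B*((m:ℝ)+2))) * (u^(m+2))⁻¹ := by
    intro u hu
    rw [hh]
    simp only []
    rw [norm_div, norm_mul, hnorm_exp, hden (m+2) u hu]
    have h1 : ‖((m:ℂ)+1)‖ = (m:ℝ)+1 := by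
      rw [show ((m:ℂ)+1) = (((m:ℝ)+1:ℝ):ℂ) by push_cast; ring, Complex.norm_real,
        Real.norm_eq_abs, abs_of_pos (by positivity)]
    rw [h1]
    have : (0:ℝ) < u^(m+2) := by positivity
    field_simp
  -- the integral of (u^(m+2))⁻¹
  have hK' : ∀ u ∈ Set.uIcc δ T, HasDerivAt (fun u : ℝ => -((u^(m+1))⁻¹/((m:ℝ)+1)))
      ((u^(m+2))⁻¹) u := by
    intro u hu
    have := Kderiv m u (ne_of_gt (hupos u hu))
    convert this using 2
  have hintinv : IntervalIntegrable (fun u : ℝ => (u^(m+2))⁻¹) volume δ T := by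
    apply ContinuousOn.intervalIntegrable
    exact ContinuousOn.inv₀ (by fun_prop) fun u hu => pow_ne_zero _ (ne_of_gt (hupos u hu))
  have hIinv := intervalIntegral.integral_eq_sub_of_hasDerivAt hK' hintinv
  set P := δ^(m+1) with hP
  set Q := T^(m+1) with hQ
  have hPpos : 0 < P := by positivity
  have hQpos : 0 < Q := lt_of_lt_of_le hPpos (pow_le_pow_left₀ (le_of_lt hδ) hδT _)
  have hPQ : P ≤ Q := pow_le_pow_left₀ (le_of_lt hδ) hδT _
  have hIinvle : (∫ u in δ..T, (u^(m+2))⁻¹) ≤ P⁻¹/((m:ℝ)+1) := by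
    rw [hIinv]
    have : (0:ℝ) ≤ Q⁻¹/((m:ℝ)+1) := by positivity
    linarith
  -- bound on ∫ h
  have hIh : ‖∫ u in δ..T, h u‖ ≤ P⁻¹/(2*Real.pi*B*((m:ℝ)+2)) := by
    calc ‖∫ u in δ..T, h u‖ ≤ ∫ u in δ..T, ‖h u‖ :=
          intervalIntegral.norm_integral_le_integral_norm hδT
      _ = (((m:ℝ)+1)/(2*Real.pi*B*((m:ℝ)+2))) * ∫ u in δ..T, (u^(m+2))⁻¹ := by
          rw [← intervalIntegral.integral_const_mul]
          apply intervalIntegral.integral_congr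
          intro u hu
          exact hhnorm u (hupos u hu)
      _ ≤ (((m:ℝ)+1)/(2*Real.pi*B*((m:ℝ)+2))) * (P⁻¹/((m:ℝ)+1)) := by
          apply mul_le_mul_of_nonneg_left hIinvle (by positivity)
      _ = P⁻¹/(2*Real.pi*B*((m:ℝ)+2)) := by
          field_simp
  -- combine
  have hGT : ‖G T‖ ≤ 1/(2*Real.pi*B*((m:ℝ)+2)*P) := by
    rw [hGnorm T (lt_of_lt_of_le hδ hδT), ← hQ]
    gcongr
  have hGδ : ‖G δ‖ = 1/(2*Real.pi*B*((m:ℝ)+2)*P) := by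
    rw [hGnorm δ hδ, ← hP]
  have htot : ‖G T - G δ + ∫ u in δ..T, h u‖ ≤ 3/(2*Real.pi*B*((m:ℝ)+2)*P) := by
    calc ‖G T - G δ + ∫ u in δ..T, h u‖ ≤ ‖G T - G δ‖ + ‖∫ u in δ..T, h u‖ := norm_add_le _ _
      _ ≤ (‖G T‖ + ‖G δ‖) + ‖∫ u in δ..T, h u‖ := by
          exact add_le_add_left (norm_sub_le _ _) _
      _ ≤ (1/(2*Real.pi*B*((m:ℝ)+2)*P) + 1/(2*Real.pi*B*((m:ℝ)+2)*P))
            + P⁻¹/(2*Real.pi*B*((m:ℝ)+2)) := by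
          exact add_le_add (add_le_add hGT (le_of_eq hGδ)) hIh
      _ = 3/(2*Real.pi*B*((m:ℝ)+2)*P) := by
          have hpi := Real.pi_pos
          field_simp
          ring
  refine le_trans htot ?_
  -- final numeric estimate
  have hBP : P * δ * B = 1 := by rw [hP, ← pow_succ]; exact hδβ
  rw [div_le_iff₀ (by positivity)]
  have hring : δ * (2*Real.pi*B*((m:ℝ)+2)*P) = 2*Real.pi*((m:ℝ)+2) * (P * δ * B) := by ring
  rw [hring, hBP, mul_one]
  nlinarith [Real.pi_gt_three, Nat.cast_nonneg (α := ℝ) m]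

/-- For every integer `r ≥ 2` there is a constant `C = C(r)` such that for all real `β`
and all real `X ≥ 1` one has `|∫₀^{X^{1/r}} e(β u^r) du| ≤ C (X/(1+|β|X))^{1/r}`. -/
theorem statement0 (r : ℕ) (hr : 2 ≤ r) :
    ∃ C : ℝ, ∀ (β X : ℝ), 1 ≤ X →
      ‖∫ u in (0:ℝ)..(X ^ ((1:ℝ)/r)), e (β * u ^ r)‖ ≤
        C * (X / (1 + |β| * X)) ^ ((1:ℝ)/r) := by
  obtain ⟨m, rfl⟩ : ∃ m, r = m + 2 := ⟨r - 2, by omega⟩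
  refine ⟨4, ?_⟩
  intro β X hX
  have hX0 : (0:ℝ) < X := lt_of_lt_of_le one_pos hX
  set er : ℝ := (1:ℝ)/((m+2:ℕ):ℝ) with her
  have hrr : ((m+2:ℕ):ℝ) = (m:ℝ)+2 := by push_cast; ring
  have her0 : 0 < er := by rw [her, hrr]; positivity
  have her1 : er ≤ 1 := by
    rw [her, hrr]
    rw [div_le_one (by positivity)]
    have : (0:ℝ) ≤ (m:ℝ) := Nat.cast_nonneg m
    linarith
  set T := X ^ er with hT
  have hT0 : 0 < T := Real.rpow_pos_of_pos hX0 _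
  have hTr : T ^ (m+2) = X := by
    rw [hT, ← Real.rpow_natCast (X ^ er) (m+2), ← Real.rpow_mul (le_of_lt hX0)]
    rw [her]
    rw [one_div_mul_cancel (by rw [hrr]; positivity), Real.rpow_one]
  set B := |β| with hB
  have hBnn : 0 ≤ B := abs_nonneg β
  have hcont : ∀ a b : ℝ, IntervalIntegrable (fun u : ℝ => e (β * u^(m+2))) volume a b := by
    intro a b
    apply Continuous.intervalIntegrable
    unfold e
    fun_prop
  have hRnn : (0:ℝ) ≤ X / (1 + B * X) := by positivity
  by_cases hc : B * X ≤ 1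
  · -- trivial bound
    have h1 : ‖∫ u in (0:ℝ)..T, e (β * u ^ (m+2))‖ ≤ 1 * |T - 0| := by
      apply intervalIntegral.norm_integral_le_of_norm_le_const
      intro u hu
      rw [norm_e]
    rw [sub_zero, abs_of_pos hT0, one_mul] at h1
    refine le_trans h1 ?_
    have h2 : X/2 ≤ X/(1 + B*X) := by
      gcongr <;> first | positivity | linarith
    have h3 : (X/2) ^ er ≤ (X/(1+B*X)) ^ er :=
      Real.rpow_le_rpow (by positivity) h2 (le_of_lt her0)
    have h4 : (X/2) ^ er = X ^ er / 2 ^ er := by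
      rw [Real.div_rpow (le_of_lt hX0) (by norm_num : (0:ℝ) ≤ 2)]
    have h5 : (2:ℝ) ^ er ≤ 2 := by
      calc (2:ℝ) ^ er ≤ (2:ℝ) ^ (1:ℝ) := Real.rpow_le_rpow_of_exponent_le (by norm_num) her1
        _ = 2 := Real.rpow_one 2
    have h6 : T / 2 ≤ (X/2) ^ er := by
      rw [h4, hT]
      gcongr <;> first | positivity | linarith [h5]
    nlinarith [h3, h6]
  · -- oscillatory case
    push_neg at hc
    have hBpos : 0 < B := by
      rcases lt_or_ge 0 B with h | h
      · exact h
      · exfalso; nlinarith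
    have hβ : β ≠ 0 := by
      intro h
      have hz : B = 0 := by rw [hB, h, abs_zero]
      exact (ne_of_gt hBpos) hz
    set δ := B ^ (-er) with hδdef
    have hδ : 0 < δ := Real.rpow_pos_of_pos hBpos _
    have hδinv : δ = (B⁻¹) ^ er := by
      rw [hδdef, Real.rpow_neg hBnn, ← Real.inv_rpow hBnn]
    have hδT : δ ≤ T := by
      rw [hδinv, hT]
      apply Real.rpow_le_rpow (by positivity) _ (le_of_lt her0)
      rw [inv_le_iff_one_le_mul₀ hBpos]
      nlinarith
    have hδβ : δ ^ (m+2) * B = 1 := by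
      have : δ ^ (m+2) = B⁻¹ := by
        rw [hδdef, ← Real.rpow_natCast (B ^ (-er)) (m+2), ← Real.rpow_mul hBnn]
        rw [her]
        rw [show -((1:ℝ)/((m+2:ℕ):ℝ)) * ((m+2:ℕ):ℝ) = -1 by
          field_simp]
        rw [Real.rpow_neg_one]
      rw [this, inv_mul_cancel₀ (ne_of_gt hBpos)]
    have hsplit : (∫ u in (0:ℝ)..T, e (β * u ^ (m+2)))
        = (∫ u in (0:ℝ)..δ, e (β * u ^ (m+2))) + ∫ u in δ..T, e (β * u ^ (m+2)) :=
      (intervalIntegral.integral_add_adjacent_intervals (hcont 0 δ) (hcont δ T)).symm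
    have h1 : ‖∫ u in (0:ℝ)..δ, e (β * u ^ (m+2))‖ ≤ δ := by
      have := intervalIntegral.norm_integral_le_of_norm_le_const (C := 1)
        (f := fun u : ℝ => e (β * u ^ (m+2))) (a := (0:ℝ)) (b := δ)
        (fun u _ => le_of_eq (norm_e _))
      rwa [sub_zero, abs_of_pos hδ, one_mul] at this
    have h2 : ‖∫ u in δ..T, e (β * u ^ (m+2))‖ ≤ δ := key m β hβ δ T hδ hδT hδβ
    have htot : ‖∫ u in (0:ℝ)..T, e (β * u ^ (m+2))‖ ≤ 2 * δ := by
      rw [hsplit]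
      calc ‖_ + _‖ ≤ _ + _ := norm_add_le _ _
        _ ≤ δ + δ := add_le_add h1 h2
        _ = 2 * δ := by ring
    refine le_trans htot ?_
    -- 2δ ≤ 4 (X/(1+BX))^er
    have h3 : 1/(2*B) ≤ X/(1+B*X) := by
      rw [div_le_div_iff₀ (by positivity) (by positivity)]
      nlinarith
    have h4 : (1/(2*B)) ^ er ≤ (X/(1+B*X)) ^ er :=
      Real.rpow_le_rpow (by positivity) h3 (le_of_lt her0)
    have h5 : (1/(2*B)) ^ er = (1/2:ℝ) ^ er * (B⁻¹) ^ er := by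
      rw [← Real.mul_rpow (by norm_num) (by positivity)]
      congr 1
      field_simp
    have h6 : (1/2:ℝ) ≤ (1/2:ℝ) ^ er := by
      calc (1/2:ℝ) = (1/2:ℝ) ^ (1:ℝ) := (Real.rpow_one _).symm
        _ ≤ (1/2:ℝ) ^ er := Real.rpow_le_rpow_of_exponent_ge (by norm_num) (by norm_num) her1
    have h7 : (1/2:ℝ) * δ ≤ (1/(2*B)) ^ er := by
      rw [h5, ← hδinv]
      exact mul_le_mul_of_nonneg_right h6 (le_of_lt hδ)
    nlinarith [h4, h7]
end

section
/- Let j ≥ 1 be an integer and C₀, C₁, …, C_j ≥ 0. There is a constant C′ depending only on j and C₀,…,C_j with the following property: for all real numbers Δ, X with 1 < Δ < X, every real β, and every smooth function ω : ℝ → ℂ supported in [1,2] satisfying |ω^{(i)}(x)| ≤ C_i Δ^i for all x and all 0 ≤ i ≤ j, and ∫_ℝ |ω^{(i)}(ξ)| dξ ≤ C_i Δ^{i−1} for all 1 ≤ i ≤ j, the function φ_β(x) = ω(x/X)·e(−βx) satisfies ∫₀^∞ |φ_β^{(j)}(x)| dx ≤ C′ · (1+|β|X) · ((Δ+|β|X)/X)^{j−1}.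 -/
open MeasureTheory

lemma support_iteratedDeriv_subset'' (n : ℕ) (f : ℝ → ℂ) :
    Function.support (iteratedDeriv n f) ⊆ tsupport f := by
  induction n with
  | zero => simpa [iteratedDeriv_zero] using subset_tsupport f
  | succ n ih =>
    rw [iteratedDeriv_succ]
    exact support_deriv_subset.trans (closure_minimal ih (isClosed_tsupport f))

lemma iteratedDeriv_cexp_real' (c : ℂ) (n : ℕ) :
    iteratedDeriv n (fun y : ℝ => Complex.exp (c * y)) = fun y : ℝ => c ^ n * Complex.exp (c * y) := by
  induction n with
  | zero => simp
  | succ n ih =>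
    rw [iteratedDeriv_succ, ih]
    funext y
    have h1 : HasDerivAt (fun y : ℝ => c * (y : ℂ)) c y := by
      simpa using (Complex.ofRealCLM.hasDerivAt (x := y)).const_mul c
    have h2 : HasDerivAt (fun y : ℝ => c ^ n * Complex.exp (c * y))
        (c ^ n * (Complex.exp (c * y) * c)) y := h1.cexp.const_mul _
    rw [h2.deriv]; ring

lemma core_ineq' {i j : ℕ} (hj : 1 ≤ j) (hij : i ≤ j) {a d : ℝ} (ha : 0 ≤ a) (hd : 0 < d) :
    a ^ (j - i) * d ^ (i - 1) ≤ (1 + a) * (d + a) ^ (j - 1) := by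
  have hda : (0:ℝ) ≤ d + a := by linarith
  rcases i with _ | m
  · simp only [Nat.sub_zero, Nat.zero_sub, pow_zero, mul_one]
    calc a ^ j = a ^ (j - 1) * a := by rw [← pow_succ, Nat.sub_add_cancel hj]
      _ ≤ (d + a) ^ (j - 1) * (1 + a) := by
          apply mul_le_mul (pow_le_pow_left₀ ha (by linarith) _) (by linarith) ha
            (pow_nonneg hda _)
      _ = (1 + a) * (d + a) ^ (j - 1) := mul_comm _ _
  · calc a ^ (j - (m + 1)) * d ^ (m + 1 - 1)
        ≤ (d + a) ^ (j - (m + 1)) * (d + a) ^ (m + 1 - 1) := by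
          apply mul_le_mul (pow_le_pow_left₀ ha (by linarith) _)
            (pow_le_pow_left₀ hd.le (by linarith) _) (pow_nonneg hd.le _) (pow_nonneg hda _)
      _ = (d + a) ^ (j - 1) := by rw [← pow_add]; congr 1; omega
      _ ≤ (1 + a) * (d + a) ^ (j - 1) :=
          le_mul_of_one_le_left (pow_nonneg hda _) (by linarith)

/-- Let `j ≥ 1` and `C₀,…,C_j ≥ 0`. There is `C'` depending only on `j` and `C₀,…,C_j` such
that for all `1 < Δ < X`, all real `β`, and every smooth `ω : ℝ → ℂ` supported in `[1,2]`
with `|ω^{(i)}(x)| ≤ C_i Δ^i` for `0 ≤ i ≤ j` and `∫_ℝ |ω^{(i)}| ≤ C_i Δ^{i-1}` for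
`1 ≤ i ≤ j`, the function `φ_β(x) = ω(x/X) e(-βx)` satisfies
`∫₀^∞ |φ_β^{(j)}(x)| dx ≤ C' (1+|β|X) ((Δ+|β|X)/X)^{j-1}`. -/
theorem statement2 (j : ℕ) (hj : 1 ≤ j) (Cc : ℕ → ℝ) (hCc : ∀ i, i ≤ j → 0 ≤ Cc i) :
    ∃ C' : ℝ, ∀ (Δ X β : ℝ), 1 < Δ → Δ < X →
      ∀ ω : ℝ → ℂ, ContDiff ℝ (⊤ : ℕ∞) ω → Function.support ω ⊆ Set.Icc 1 2 →
      (∀ x : ℝ, ∀ i, i ≤ j → ‖iteratedDeriv i ω x‖ ≤ Cc i * Δ ^ i) →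
      (∀ i, 1 ≤ i → i ≤ j → (∫ ξ : ℝ, ‖iteratedDeriv i ω ξ‖) ≤ Cc i * Δ ^ (i - 1)) →
      (∫ x in Set.Ioi (0:ℝ), ‖iteratedDeriv j (fun y => ω (y / X) * e (-(β * y))) x‖) ≤
        C' * (1 + |β| * X) * ((Δ + |β| * X) / X) ^ (j - 1) := by
  classical
  refine ⟨∑ i ∈ Finset.range (j + 1), (j.choose i : ℝ) * (2 * Real.pi) ^ (j - i) * Cc i, ?_⟩
  intro Δ X β hΔ hΔX ω hω hsupp hpt hint
  have hΔ0 : (0:ℝ) < Δ := by linarith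
  have hX0 : (0:ℝ) < X := by linarith
  have hXne : X ≠ 0 := hX0.ne'
  have hXinv : (0:ℝ) ≤ X⁻¹ := by positivity
  set b : ℝ := |β| with hbdef
  have hb0 : 0 ≤ b := abs_nonneg β
  have hπ : (0:ℝ) < Real.pi := Real.pi_pos
  -- the exponential factor
  set c : ℂ := ((-(2 * Real.pi * β) : ℝ) : ℂ) * Complex.I with hc
  have hge : ∀ y : ℝ, e (-(β * y)) = Complex.exp (c * y) := by
    intro y
    unfold e
    rw [hc]
    congr 1
    push_cast
    ring
  have hnormc : ‖c‖ = 2 * Real.pi * b := by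
    rw [hc, norm_mul, Complex.norm_I, mul_one, Complex.norm_real, Real.norm_eq_abs,
      abs_neg, abs_mul, abs_mul, abs_of_pos hπ, hbdef]
    norm_num
  have hnormexp : ∀ y : ℝ, ‖Complex.exp (c * y)‖ = 1 := by
    intro y
    have : c * (y : ℂ) = ((-(2 * Real.pi * β) * y : ℝ) : ℂ) * Complex.I := by
      rw [hc]; push_cast; ring
    rw [this, Complex.norm_exp_ofReal_mul_I]
  -- the two factors
  set F : ℝ → ℂ := fun y => ω (X⁻¹ * y) with hF
  set G : ℝ → ℂ := fun y => Complex.exp (c * y) with hG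
  have hφ : (fun y : ℝ => ω (y / X) * e (-(β * y))) = fun y => F y * G y := by
    funext y
    rw [hge y, hF, hG]
    simp [div_eq_inv_mul]
  have hFs : ContDiff ℝ (⊤ : ℕ∞) F :=
    hω.comp ((contDiff_const.mul contDiff_id : ContDiff ℝ (⊤ : ℕ∞) fun y : ℝ => X⁻¹ * y))
  have hGs : ContDiff ℝ (⊤ : ℕ∞) G :=
    (contDiff_const.mul Complex.ofRealCLM.contDiff).cexp
  -- iterated derivatives of the factors
  have hFi : ∀ (i : ℕ) (x : ℝ),
      ‖iteratedDeriv i F x‖ = X⁻¹ ^ i * ‖iteratedDeriv i ω (X⁻¹ * x)‖ := by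
    intro i x
    have h := iteratedDeriv_comp_const_smul (f := ω) (hω.of_le (by exact_mod_cast le_top) : ContDiff ℝ (i : ℕ) ω) X⁻¹
    rw [hF]
    rw [congrFun h x, norm_smul, Real.norm_eq_abs, abs_pow, abs_of_nonneg hXinv]
  have hGi : ∀ (m : ℕ) (x : ℝ), ‖iteratedDeriv m G x‖ = (2 * Real.pi * b) ^ m := by
    intro m x
    rw [hG, congrFun (iteratedDeriv_cexp_real' c m) x, norm_mul, norm_pow, hnormc,
      hnormexp, mul_one]
  -- pointwise Leibniz bound
  have hpt2 : ∀ x : ℝ, ‖iteratedDeriv j (fun y => F y * G y) x‖ ≤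
      ∑ i ∈ Finset.range (j + 1),
        (j.choose i : ℝ) * X⁻¹ ^ i * (2 * Real.pi * b) ^ (j - i) *
          ‖iteratedDeriv i ω (X⁻¹ * x)‖ := by
    intro x
    rw [← norm_iteratedFDeriv_eq_norm_iteratedDeriv]
    refine (norm_iteratedFDeriv_mul_le hFs hGs x (by exact_mod_cast le_top)).trans (le_of_eq ?_)
    refine Finset.sum_congr rfl fun i _ => ?_
    rw [norm_iteratedFDeriv_eq_norm_iteratedDeriv, norm_iteratedFDeriv_eq_norm_iteratedDeriv,
      hFi i x, hGi (j - i) x]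
    ring
  -- support and integrability facts
  have htsupp : tsupport ω ⊆ Set.Icc 1 2 := closure_minimal hsupp isClosed_Icc
  have hzero : ∀ (i : ℕ) (y : ℝ), y ∉ Set.Icc (1:ℝ) 2 → iteratedDeriv i ω y = 0 := by
    intro i y hy
    by_contra h
    exact hy (htsupp (support_iteratedDeriv_subset'' i ω h))
  have hcont : ∀ i : ℕ, Continuous fun x : ℝ => ‖iteratedDeriv i ω (X⁻¹ * x)‖ :=
    fun i => ((hω.continuous_iteratedDeriv i (by exact_mod_cast le_top)).comp
      (continuous_const.mul continuous_id)).norm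
  have hInt : ∀ i : ℕ, Integrable (fun x : ℝ => ‖iteratedDeriv i ω (X⁻¹ * x)‖) := by
    intro i
    refine (hcont i).integrable_of_hasCompactSupport ?_
    apply HasCompactSupport.intro (isCompact_Icc (a := X) (b := 2 * X))
    intro x hx
    rw [norm_eq_zero]
    apply hzero
    intro hmem
    rw [Set.mem_Icc] at hmem
    apply hx
    constructor
    · have h := mul_le_mul_of_nonneg_left hmem.1 hX0.le
      rwa [mul_one, ← mul_assoc, mul_inv_cancel₀ hXne, one_mul] at h
    · have h := mul_le_mul_of_nonneg_left hmem.2 hX0.le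
      rwa [← mul_assoc, mul_inv_cancel₀ hXne, one_mul, mul_comm X 2] at h
  -- the dominating function
  set S : ℝ → ℝ := fun x => ∑ i ∈ Finset.range (j + 1),
      (j.choose i : ℝ) * X⁻¹ ^ i * (2 * Real.pi * b) ^ (j - i) *
        ‖iteratedDeriv i ω (X⁻¹ * x)‖ with hS
  have hSInt : Integrable S := by
    rw [hS]
    apply integrable_finset_sum
    intro i _
    simpa [mul_assoc] using ((hInt i).const_mul
      ((j.choose i : ℝ) * X⁻¹ ^ i * (2 * Real.pi * b) ^ (j - i)))
  have step1 : (∫ x in Set.Ioi (0:ℝ), ‖iteratedDeriv j (fun y => ω (y / X) * e (-(β * y))) x‖)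
      ≤ ∫ x in Set.Ioi (0:ℝ), S x := by
    rw [hφ]
    refine integral_mono_of_nonneg (Filter.Eventually.of_forall fun x => norm_nonneg _)
      (hSInt.restrict) (Filter.Eventually.of_forall fun x => hpt2 x)
  -- compute the integral of each summand
  have hIi : ∀ i : ℕ, i ≤ j →
      (∫ x in Set.Ioi (0:ℝ), ‖iteratedDeriv i ω (X⁻¹ * x)‖) ≤ X * (Cc i * Δ ^ (i - 1)) := by
    intro i hi
    have h1 : (∫ x in Set.Ioi (0:ℝ), ‖iteratedDeriv i ω (X⁻¹ * x)‖)
        = ∫ x : ℝ, ‖iteratedDeriv i ω (X⁻¹ * x)‖ := by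
      apply setIntegral_eq_integral_of_forall_compl_eq_zero
      intro x hx
      rw [Set.mem_Ioi, not_lt] at hx
      rw [norm_eq_zero]
      apply hzero
      intro hmem
      rw [Set.mem_Icc] at hmem
      have : X⁻¹ * x ≤ 0 := mul_nonpos_of_nonneg_of_nonpos hXinv hx
      linarith [hmem.1]
    have h2 : (∫ x : ℝ, ‖iteratedDeriv i ω (X⁻¹ * x)‖)
        = X * ∫ ξ : ℝ, ‖iteratedDeriv i ω ξ‖ := by
      rw [Measure.integral_comp_inv_mul_left (fun ξ => ‖iteratedDeriv i ω ξ‖) X,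
        abs_of_pos hX0, smul_eq_mul]
    rw [h1, h2]
    apply mul_le_mul_of_nonneg_left _ hX0.le
    rcases Nat.eq_zero_or_pos i with hi0 | hi1
    · subst hi0
      have hω0 : (∫ ξ : ℝ, ‖iteratedDeriv 0 ω ξ‖)
          = ∫ ξ in Set.Icc (1:ℝ) 2, ‖iteratedDeriv 0 ω ξ‖ := by
        symm
        apply setIntegral_eq_integral_of_forall_compl_eq_zero
        intro x hx
        rw [norm_eq_zero]
        exact hzero 0 x hx
      rw [hω0]
      have hle : (∫ ξ in Set.Icc (1:ℝ) 2, ‖iteratedDeriv 0 ω ξ‖)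
          ≤ ∫ _ξ in Set.Icc (1:ℝ) 2, Cc 0 := by
        apply setIntegral_mono_on
          (((hω.continuous_iteratedDeriv 0 (by simp)).norm).integrableOn_Icc)
          (integrableOn_const (by rw [Real.volume_Icc]; norm_num))
          measurableSet_Icc
        intro x _
        simpa using hpt x 0 (by omega)
      refine hle.trans ?_
      rw [setIntegral_const, Real.volume_real_Icc, smul_eq_mul]
      norm_num
    · exact hint i hi1 hi
  -- assemble
  have step2 : (∫ x in Set.Ioi (0:ℝ), S x)
      ≤ ∑ i ∈ Finset.range (j + 1),
        (j.choose i : ℝ) * X⁻¹ ^ i * (2 * Real.pi * b) ^ (j - i) * (X * (Cc i * Δ ^ (i - 1))) := by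
    rw [hS]
    rw [integral_finset_sum _ (fun i _ => by
      simpa [mul_assoc] using ((hInt i).const_mul
        ((j.choose i : ℝ) * X⁻¹ ^ i * (2 * Real.pi * b) ^ (j - i))).restrict)]
    refine Finset.sum_le_sum fun i hi => ?_
    rw [Finset.mem_range] at hi
    have hcoef : 0 ≤ (j.choose i : ℝ) * X⁻¹ ^ i * (2 * Real.pi * b) ^ (j - i) := by
      apply mul_nonneg (mul_nonneg (Nat.cast_nonneg _) (pow_nonneg hXinv _))
      apply pow_nonneg (by positivity)
    calc (∫ x in Set.Ioi (0:ℝ),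
          (j.choose i : ℝ) * X⁻¹ ^ i * (2 * Real.pi * b) ^ (j - i) *
            ‖iteratedDeriv i ω (X⁻¹ * x)‖)
        = (j.choose i : ℝ) * X⁻¹ ^ i * (2 * Real.pi * b) ^ (j - i) *
            ∫ x in Set.Ioi (0:ℝ), ‖iteratedDeriv i ω (X⁻¹ * x)‖ := by
          rw [integral_const_mul]
      _ ≤ _ := mul_le_mul_of_nonneg_left (hIi i (by omega)) hcoef
  -- termwise final bound
  have step3 : ∀ i ∈ Finset.range (j + 1),
      (j.choose i : ℝ) * X⁻¹ ^ i * (2 * Real.pi * b) ^ (j - i) * (X * (Cc i * Δ ^ (i - 1)))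
        ≤ (j.choose i : ℝ) * (2 * Real.pi) ^ (j - i) * Cc i *
          ((1 + b * X) * ((Δ + b * X) / X) ^ (j - 1)) := by
    intro i hi
    rw [Finset.mem_range] at hi
    have hij : i ≤ j := by omega
    have hkey : b ^ (j - i) * X⁻¹ ^ i * X * Δ ^ (i - 1)
        ≤ (1 + b * X) * ((Δ + b * X) / X) ^ (j - 1) := by
      have heq : b ^ (j - i) * X⁻¹ ^ i * X * Δ ^ (i - 1)
          = ((b * X) ^ (j - i) * Δ ^ (i - 1)) / X ^ (j - 1) := by
        rcases i with _ | m
        · have hXj : X ^ j = X ^ (j - 1) * X := by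
            rw [← pow_succ, Nat.sub_add_cancel hj]
          rw [mul_pow]
          simp only [Nat.sub_zero, Nat.zero_sub, pow_zero, mul_one, pow_zero]
          rw [hXj]
          field_simp
        · have hXsplit : X ^ (j - 1) = X ^ (j - (m + 1)) * X ^ m := by
            rw [← pow_add]; congr 1; omega
          rw [mul_pow, hXsplit]
          have hm : m + 1 - 1 = m := rfl
          rw [hm]
          field_simp
          ring_nf
          field_simp
          rw [mul_assoc, ← mul_pow, mul_one_div_cancel hXne, one_pow, mul_one]
      rw [heq, div_pow, ← mul_div_assoc]
      exact (div_le_div_iff_of_pos_right (pow_pos hX0 (j - 1))).mpr (core_ineq' hj hij (mul_nonneg hb0 hX0.le) hΔ0)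
    calc (j.choose i : ℝ) * X⁻¹ ^ i * (2 * Real.pi * b) ^ (j - i) * (X * (Cc i * Δ ^ (i - 1)))
        = ((j.choose i : ℝ) * (2 * Real.pi) ^ (j - i) * Cc i) *
            (b ^ (j - i) * X⁻¹ ^ i * X * Δ ^ (i - 1)) := by
          rw [mul_pow]; ring
      _ ≤ ((j.choose i : ℝ) * (2 * Real.pi) ^ (j - i) * Cc i) *
            ((1 + b * X) * ((Δ + b * X) / X) ^ (j - 1)) := by
          apply mul_le_mul_of_nonneg_left hkey
          apply mul_nonneg (mul_nonneg (Nat.cast_nonneg _) (by positivity)) (hCc i hij)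
  calc (∫ x in Set.Ioi (0:ℝ), ‖iteratedDeriv j (fun y => ω (y / X) * e (-(β * y))) x‖)
      ≤ ∫ x in Set.Ioi (0:ℝ), S x := step1
    _ ≤ ∑ i ∈ Finset.range (j + 1),
        (j.choose i : ℝ) * X⁻¹ ^ i * (2 * Real.pi * b) ^ (j - i) *
          (X * (Cc i * Δ ^ (i - 1))) := step2
    _ ≤ ∑ i ∈ Finset.range (j + 1), (j.choose i : ℝ) * (2 * Real.pi) ^ (j - i) * Cc i *
          ((1 + b * X) * ((Δ + b * X) / X) ^ (j - 1)) := Finset.sum_le_sum step3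
    _ = (∑ i ∈ Finset.range (j + 1), (j.choose i : ℝ) * (2 * Real.pi) ^ (j - i) * Cc i) *
          (1 + b * X) * ((Δ + b * X) / X) ^ (j - 1) := by
        rw [mul_assoc, ← Finset.sum_mul]
end
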